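/- For all integers n, m, t with n ≥ m ≥ t ≥ 2, the minimum size of a covering design satisfies C(n,m,t) < ((n/m) · ((n−t+1)/(m−t+1)))^{t/2} · min{1 + t + t·log(m/t), 1 + m·log 2, 1 + t·log m} + 1, where log denotes the natural logarithm. -/

import Mathlib

/-- An `(n,m,t)`-covering design of size `k`. -/
def IsCoveringDesign (n m t k : ℕ) (S : Fin k → Finset (Fin n)) : Prop :=
  (∀ i, (S i).card = m) ∧ ∀ T : Finset (Fin n), T.card ≤ t → ∃ i, T ⊆ S i

/-- `C(n,m,t)`: the minimum size of an `(n,m,t)`-covering design. -/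
noncomputable def coveringNumber (n m t : ℕ) : ℕ :=
  sInf {k : ℕ | ∃ S : Fin k → Finset (Fin n), IsCoveringDesign n m t k S}

/-!
Greedy covering. With `p = C(m,t)/C(n,t)`, double counting shows that for any
family `U` of `t`-sets some `m`-set contains at least `p·|U|` members of `U`. So after `k` greedy
choices at most `C(n,t)(1-p)^k ≤ C(n,t)e^{-pk}` of the `t`-sets are uncovered, and one more
block for each of them gives `C(n,m,t) ≤ k + C(n,t)e^{-pk}`. Taking `k = ⌈log C(m,t) / p⌉` turns
this into `C(n,m,t) ≤ (log C(m,t) + 3/2) / p`. Finally `1/p` is a product of `t` ratios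
`(n-i)/(m-i)`; pairing `i` with `t-1-i` bounds each pair by `(n/m)·(n-t+1)/(m-t+1)`, while
`log C(m,t) + 3/2` is bounded via `C(m,t) ≤ m^t/t!`, Stirling's lower bound for `t!`, and
`C(m,t) ≤ 2^{m-1}`.
-/

open Finset Real

section Greedy

variable {α : Type*} [Fintype α] [DecidableEq α]

lemma card_powersetCard_supersets {T : Finset α} {m : ℕ} (hTm : #T ≤ m) :
    #{A ∈ powersetCard m univ | T ⊆ A} = (Fintype.card α - #T).choose (m - #T) := by
  rw [← card_compl, ← card_powersetCard]
  refine card_bij' (fun A _ => A \ T) (fun C _ => C ∪ T) ?_ ?_ ?_ ?_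
  · intro A hA
    rw [mem_filter, mem_powersetCard_univ] at hA
    rw [mem_powersetCard, card_sdiff_of_subset hA.2, hA.1]
    exact ⟨fun x hx => by simp_all, rfl⟩
  · intro C hC
    rw [mem_powersetCard, subset_compl_iff_disjoint_right] at hC
    rw [mem_filter, mem_powersetCard_univ, card_union_of_disjoint hC.1, hC.2]
    exact ⟨by omega, subset_union_right⟩
  · intro A hA
    exact sdiff_union_of_subset (mem_filter.1 hA).2
  · intro C hC
    rw [mem_powersetCard, subset_compl_iff_disjoint_right] at hC
    rw [union_sdiff_right, hC.1.sdiff_eq_left]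

lemma exists_card_filter_subset_ge {U : Finset (Finset α)} {t m : ℕ} (hU : ∀ T ∈ U, #T = t)
    (htm : t ≤ m) (hm : m ≤ Fintype.card α) :
    ∃ A : Finset α, #A = m ∧
      (m.choose t : ℝ) / (Fintype.card α).choose t * #U ≤ #{T ∈ U | T ⊆ A} := by
  set n := Fintype.card α
  have hdouble : ∑ A ∈ powersetCard m univ, #{T ∈ U | T ⊆ A} = #U * (n - t).choose (m - t) := by
    rw [← sum_const_nat fun T hT => hU T hT ▸ card_powersetCard_supersets (hU T hT ▸ htm)]
    exact sum_card_bipartiteAbove_eq_sum_card_bipartiteBelow (fun (A T : Finset α) => T ⊆ A)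
  obtain ⟨A, hA, hAU⟩ := exists_le_of_sum_le (s := powersetCard m univ)
    (powersetCard_nonempty.2 (by rwa [card_univ]))
    (f := fun _ => #U * (n - t).choose (m - t)) (g := fun A => n.choose m * #{T ∈ U | T ⊆ A})
    (by rw [sum_const, card_powersetCard, card_univ, ← mul_sum, hdouble, smul_eq_mul])
  refine ⟨A, mem_powersetCard_univ.1 hA, ?_⟩
  have hN : (0 : ℝ) < n.choose t := by exact_mod_cast Nat.choose_pos (htm.trans hm)
  rw [div_mul_eq_mul_div, div_le_iff₀ hN, mul_comm (#{T ∈ U | T ⊆ A} : ℝ)]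
  refine mod_cast Nat.le_of_mul_le_mul_right ?_ (Nat.choose_pos (Nat.sub_le_sub_right hm t))
  calc m.choose t * #U * (n - t).choose (m - t) = m.choose t * (#U * (n - t).choose (m - t)) := by
        ring
    _ ≤ m.choose t * (n.choose m * #{T ∈ U | T ⊆ A}) := Nat.mul_le_mul_left _ hAU
    _ = n.choose t * #{T ∈ U | T ⊆ A} * (n - t).choose (m - t) := by
        rw [← mul_assoc, mul_comm (m.choose t), Nat.choose_mul htm]; ring

def uncoveredSets (t : ℕ) (S : Finset (Finset α)) : Finset (Finset α) :=
  {T ∈ powersetCard t univ | ∀ A ∈ S, ¬T ⊆ A}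

lemma uncoveredSets_insert (t : ℕ) (A : Finset α) (S : Finset (Finset α)) :
    uncoveredSets t (insert A S) = {T ∈ uncoveredSets t S | ¬T ⊆ A} := by
  ext T
  simp only [uncoveredSets, mem_filter, forall_mem_insert]
  tauto

lemma exists_card_uncoveredSets_le {t m : ℕ} (htm : t ≤ m) (hm : m ≤ Fintype.card α) (k : ℕ) :
    ∃ S : Finset (Finset α), (∀ A ∈ S, #A = m) ∧ #S ≤ k ∧
      (#(uncoveredSets t S) : ℝ) ≤ (Fintype.card α).choose t *
        (1 - (m.choose t : ℝ) / (Fintype.card α).choose t) ^ k := by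
  induction k with
  | zero =>
    refine ⟨∅, by simp, by simp, ?_⟩
    simp [uncoveredSets]
  | succ k ih =>
    obtain ⟨S, hS, hSk, hSU⟩ := ih
    obtain ⟨A, hA, hAU⟩ := exists_card_filter_subset_ge
      (U := uncoveredSets t S) (fun T hT => mem_powersetCard_univ.1 (mem_filter.1 hT).1) htm hm
    refine ⟨insert A S, forall_mem_insert _ _ _ |>.2 ⟨hA, hS⟩,
      (card_insert_le A S).trans (by omega), ?_⟩
    have hsplit := card_filter_add_card_filter_not (s := uncoveredSets t S) (· ⊆ A)
    rw [uncoveredSets_insert, pow_succ, ← mul_assoc]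
    have h1p : 0 ≤ 1 - (m.choose t : ℝ) / (Fintype.card α).choose t := by
      rw [sub_nonneg]
      exact div_le_one_of_le₀ (mod_cast Nat.choose_le_choose t hm) (Nat.cast_nonneg _)
    have : ((#{T ∈ uncoveredSets t S | ¬T ⊆ A} : ℕ) : ℝ) ≤ #(uncoveredSets t S) *
        (1 - (m.choose t : ℝ) / (Fintype.card α).choose t) := by
      have hsplitR : ((#{T ∈ uncoveredSets t S | T ⊆ A} : ℕ) : ℝ) +
          #{T ∈ uncoveredSets t S | ¬T ⊆ A} = #(uncoveredSets t S) := mod_cast hsplit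
      linarith
    exact this.trans (mul_le_mul_of_nonneg_right hSU h1p)

end Greedy

lemma coveringNumber_le_card {n m t : ℕ} (S : Finset (Finset (Fin n))) (hS : ∀ A ∈ S, #A = m)
    (hcover : ∀ T : Finset (Fin n), #T ≤ t → ∃ A ∈ S, T ⊆ A) :
    coveringNumber n m t ≤ #S := by
  refine Nat.sInf_le ⟨fun i => S.equivFin.symm i, fun i => hS _ (S.equivFin.symm i).2,
    fun T hT => ?_⟩
  obtain ⟨A, hA, hTA⟩ := hcover T hT
  exact ⟨S.equivFin ⟨A, hA⟩, by simpa using hTA⟩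

lemma coveringNumber_le_card_add_card_uncoveredSets {n m t : ℕ} (htm : t ≤ m) (hmn : m ≤ n)
    {S : Finset (Finset (Fin n))} (hS : ∀ A ∈ S, #A = m) :
    coveringNumber n m t ≤ #S + #(uncoveredSets t S) := by
  choose! extend hextend using fun T (hT : T ∈ uncoveredSets t S) =>
    exists_subsuperset_card_eq (subset_univ T)
      ((mem_powersetCard_univ.1 (mem_filter.1 hT).1).trans_le htm) (by simpa using hmn)
  refine (coveringNumber_le_card (S ∪ (uncoveredSets t S).image extend) ?_ ?_).trans
    ((card_union_le _ _).trans (Nat.add_le_add_left card_image_le _))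
  · simp only [mem_union, mem_image]
    rintro A (hA | ⟨T, hT, rfl⟩)
    exacts [hS A hA, (hextend T hT).2.2]
  · intro T hT
    obtain ⟨T', hTT', -, hT'⟩ := exists_subsuperset_card_eq (subset_univ T) hT
      (by simpa using htm.trans hmn)
    by_cases hcov : ∃ A ∈ S, T' ⊆ A
    · obtain ⟨A, hA, hT'A⟩ := hcov
      exact ⟨A, mem_union_left _ hA, hTT'.trans hT'A⟩
    · have hT'U : T' ∈ uncoveredSets t S := by
        simp only [uncoveredSets, mem_filter, mem_powersetCard_univ]
        push Not at hcov
        exact ⟨hT', hcov⟩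
      exact ⟨extend T', mem_union_right _ (mem_image_of_mem _ hT'U),
        hTT'.trans (hextend T' hT'U).1⟩

lemma exists_nat_add_mul_one_sub_pow_le {p L : ℝ} (hp0 : 0 < p) (hp1 : p ≤ 1) (hL : 0 ≤ L) :
    ∃ k : ℕ, k + exp L / p * (1 - p) ^ k ≤ (L + 3 / 2) / p := by
  refine ⟨⌈L / p⌉₊, ?_⟩
  set u := p * (⌈L / p⌉₊ - L / p) with hu
  have hu0 : 0 ≤ u := mul_nonneg hp0.le (sub_nonneg.2 (Nat.le_ceil _))
  have hu1 : u ≤ 1 := by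
    have := Nat.ceil_lt_add_one (div_nonneg hL hp0.le)
    nlinarith
  have hk : (⌈L / p⌉₊ : ℝ) = (L + u) / p := by
    rw [hu]; field_simp; ring
  have hpow : (1 - p) ^ ⌈L / p⌉₊ ≤ exp (-(L + u)) := calc
    _ ≤ exp (-p) ^ ⌈L / p⌉₊ := pow_le_pow_left₀ (by linarith) (one_sub_le_exp_neg p) _
    _ = exp (-(L + u)) := by rw [← exp_nat_mul, hk]; field_simp
  have hexp : exp (-u) ≤ 1 / (1 + u) := by
    rw [exp_neg, ← one_div]
    exact one_div_le_one_div_of_le (by positivity) (by linarith [add_one_le_exp u])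
  -- `u + 1/(1+u) ≤ 3/2` on `[0,1]` because `2u² - u - 1 = (2u+1)(u-1) ≤ 0`
  have hkey : u + 1 / (1 + u) ≤ 3 / 2 := by
    rw [← sub_nonneg]
    have : 3 / 2 - (u + 1 / (1 + u)) = (1 - u) * (2 * u + 1) / (2 * (1 + u)) := by
      field_simp; ring
    rw [this]
    exact div_nonneg (mul_nonneg (by linarith) (by linarith)) (by linarith)
  calc (⌈L / p⌉₊ : ℝ) + exp L / p * (1 - p) ^ ⌈L / p⌉₊
      ≤ (L + u) / p + exp L / p * exp (-(L + u)) := by rw [hk]; gcongr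
    _ = (L + u + exp (-u)) / p := by
        rw [neg_add, exp_add, ← mul_assoc, div_mul_eq_mul_div, exp_neg L,
          mul_inv_cancel₀ (exp_pos L).ne']
        ring
    _ ≤ (L + 3 / 2) / p := div_le_div_of_nonneg_right (by linarith) hp0.le

lemma cast_choose_div_cast_choose {n m t : ℕ} (htm : t ≤ m) (hmn : m ≤ n) :
    (n.choose t : ℝ) / m.choose t = ∏ i ∈ range t, ((n : ℝ) - i) / (m - i) := by
  have hdesc : ∀ a, t ≤ a → (a.descFactorial t : ℝ) = ∏ i ∈ range t, ((a : ℝ) - i) := by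
    intro a hta
    rw [Nat.descFactorial_eq_prod_range, Nat.cast_prod]
    exact prod_congr rfl fun i hi => Nat.cast_sub (by have := mem_range.1 hi; omega)
  rw [prod_div_distrib, ← hdesc n (htm.trans hmn), ← hdesc m htm,
    Nat.descFactorial_eq_factorial_mul_choose, Nat.descFactorial_eq_factorial_mul_choose,
    Nat.cast_mul, Nat.cast_mul, mul_div_mul_left _ _ (mod_cast t.factorial_ne_zero)]

/-- `(a - x)(a - s + x) = a(a - s) + x(s - x)`, and adding the same `x(s - x) ≥ 0` to the
numerator and denominator of `a(a - s) / (b(b - s)) ≥ 1` decreases it. -/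
lemma div_mul_div_reflect_le {a b s x : ℝ} (hx : 0 ≤ x) (hxs : x ≤ s) (hsb : s < b)
    (hba : b ≤ a) :
    (a - x) / (b - x) * ((a - (s - x)) / (b - (s - x))) ≤ a / b * ((a - s) / (b - s)) := by
  rw [div_mul_div_comm, div_mul_div_comm, div_le_div_iff₀ (by nlinarith) (by nlinarith)]
  have hc : 0 ≤ x * (s - x) := mul_nonneg hx (by linarith)
  have hbb : b * (b - s) ≤ a * (a - s) := by nlinarith
  nlinarith [mul_le_mul_of_nonneg_left hbb hc]

lemma cast_choose_div_cast_choose_le_rpow {n m t : ℕ} (htm : t ≤ m) (hmn : m ≤ n) :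
    (n.choose t : ℝ) / m.choose t ≤
      ((n : ℝ) / m * ((n - t + 1) / (m - t + 1))) ^ ((t : ℝ) / 2) := by
  have htm' : (t : ℝ) ≤ m := mod_cast htm
  have hmn' : (m : ℝ) ≤ n := mod_cast hmn
  set f : ℕ → ℝ := fun i => ((n : ℝ) - i) / (m - i)
  set Q := (n : ℝ) / m * ((n - t + 1) / (m - t + 1))
  have hf : ∀ i ∈ range t, 0 ≤ f i := fun i hi => by
    have : (i : ℝ) + 1 ≤ t := mod_cast mem_range.1 hi
    exact div_nonneg (by linarith) (by linarith)
  have hfQ : ∀ i ∈ range t, f i * f (t - 1 - i) ≤ Q := fun i hi => by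
    have hi : i < t := mem_range.1 hi
    have hcast : ((t - 1 - i : ℕ) : ℝ) = (t - 1 : ℝ) - i := by
      rw [Nat.cast_sub (by omega), Nat.cast_sub (by omega), Nat.cast_one]
    have hi' : (i : ℝ) + 1 ≤ t := mod_cast hi
    have := div_mul_div_reflect_le (a := n) (s := t - 1) (Nat.cast_nonneg i) (by linarith)
      (by linarith) hmn'
    simp only [f, Q, hcast]
    convert this using 3 <;> ring
  have hsq : ((n.choose t : ℝ) / m.choose t) ^ 2 ≤ Q ^ t := calc
    ((n.choose t : ℝ) / m.choose t) ^ 2 = ∏ i ∈ range t, f i * f (t - 1 - i) := by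
      rw [sq, prod_mul_distrib, prod_range_reflect f t, cast_choose_div_cast_choose htm hmn]
    _ ≤ ∏ _i ∈ range t, Q := prod_le_prod (fun i hi => mul_nonneg (hf i hi)
        (hf _ (mem_range.2 (by have := mem_range.1 hi; omega)))) hfQ
    _ = Q ^ t := by rw [prod_const, card_range]
  have hQ : 0 ≤ Q := by
    apply mul_nonneg (by positivity) (div_nonneg _ _) <;> linarith
  rw [← pow_le_pow_iff_left₀ (by positivity) (rpow_nonneg hQ _) two_ne_zero,
    ← rpow_mul_natCast hQ, Nat.cast_ofNat, div_mul_cancel₀ _ two_ne_zero, rpow_natCast]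
  exact hsq

lemma mul_log_sub_add_half_le_log_factorial {t : ℕ} (ht : t ≠ 0) :
    t * log t - t + 1 / 2 ≤ log t.factorial := by
  have hlogt : 0 ≤ log t := log_natCast_nonneg t
  have hlog2π : 1 ≤ log (2 * π) := by
    rw [le_log_iff_exp_le (by positivity)]
    linarith [exp_one_lt_d9, pi_gt_three]
  linarith [Stirling.le_log_factorial_stirling ht]

lemma log_choose_add_three_halves_le {m t : ℕ} (ht : 2 ≤ t) (htm : t ≤ m) :
    log (m.choose t) + 3 / 2 ≤
      min (1 + t + t * log (m / t)) (min (1 + m * log 2) (1 + t * log m)) := by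
  have hB : (0 : ℝ) < m.choose t := mod_cast Nat.choose_pos htm
  have ht0 : (0 : ℝ) < t := mod_cast (by omega : 0 < t)
  have hm0 : (0 : ℝ) < m := mod_cast (by omega : 0 < m)
  have hlog2 : 1 / 2 < log 2 := by linarith [log_two_gt_d9]
  have hpow : log (m.choose t) ≤ t * log m - log t.factorial := by
    rw [← log_pow, ← log_div (by positivity) (by positivity)]
    exact log_le_log hB (Nat.choose_le_pow_div t m)
  have htwo : log (m.choose t) ≤ (m - 1) * log 2 := by
    obtain ⟨M, rfl⟩ : ∃ M, m = M + 1 := ⟨m - 1, by omega⟩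
    rw [Nat.cast_add_one, add_sub_cancel_right, ← log_pow]
    exact log_le_log hB (mod_cast Nat.choose_succ_le_two_pow M t)
  have hfact : log 2 ≤ log t.factorial :=
    log_le_log two_pos (mod_cast Nat.le_trans (by norm_num) (Nat.factorial_le ht))
  have hstirling := mul_log_sub_add_half_le_log_factorial (t := t) (by omega)
  rw [log_div hm0.ne' ht0.ne']
  refine le_min (by linarith) (le_min (by linarith) (by linarith))

/-- `C(n,m,t) < ((n/m)·((n−t+1)/(m−t+1)))^{t/2} ·
  min{1 + t + t·log(m/t), 1 + m·log 2, 1 + t·log m} + 1`. -/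
theorem coveringNumber_upper_bound (n m t : ℕ) (ht : 2 ≤ t) (htm : t ≤ m) (hmn : m ≤ n) :
    (coveringNumber n m t : ℝ) <
      ((n : ℝ) / (m : ℝ) * (((n : ℝ) - (t : ℝ) + 1) / ((m : ℝ) - (t : ℝ) + 1)))
          ^ ((t : ℝ) / 2) *
        min (1 + (t : ℝ) + (t : ℝ) * Real.log ((m : ℝ) / (t : ℝ)))
          (min (1 + (m : ℝ) * Real.log 2) (1 + (t : ℝ) * Real.log (m : ℝ))) + 1 := by
  have hB1 : 1 ≤ (m.choose t : ℝ) := mod_cast Nat.choose_pos htm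
  have hBN : (m.choose t : ℝ) ≤ n.choose t := mod_cast Nat.choose_le_choose t hmn
  set N : ℝ := (n.choose t : ℝ)
  set B : ℝ := (m.choose t : ℝ)
  have hN : 0 < N := by linarith
  obtain ⟨k, hk⟩ := exists_nat_add_mul_one_sub_pow_le (div_pos (by linarith) hN)
    (div_le_one_of_le₀ hBN hN.le) (log_nonneg hB1)
  rw [exp_log (by linarith), div_div_cancel₀ (by linarith)] at hk
  obtain ⟨S, hS, hSk, hU⟩ := exists_card_uncoveredSets_le (α := Fin n) htm (by simpa using hmn) k
  rw [Fintype.card_fin] at hU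
  calc (coveringNumber n m t : ℝ) ≤ #S + #(uncoveredSets t S) :=
        mod_cast coveringNumber_le_card_add_card_uncoveredSets htm hmn hS
    _ ≤ k + N * (1 - B / N) ^ k := by gcongr
    _ ≤ (log B + 3 / 2) / (B / N) := hk
    _ = N / B * (log B + 3 / 2) := by field_simp
    _ ≤ _ := by
        have hratio := cast_choose_div_cast_choose_le_rpow htm hmn
        exact mul_le_mul hratio (log_choose_add_three_halves_le ht htm)
          (by linarith [log_nonneg hB1]) ((by positivity : 0 ≤ N / B).trans hratio)
    _ < _ := lt_add_one _
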